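/- Let p5, p7 ∈ ℂ[v,y] ⊂ S, q5, q7 ∈ ℂ[v] ⊂ S and k5, k7 ∈ ℂ. Set E5 = (2y + p5·t)∂_y + (−v + q5·t)∂_v + k5·t·∂_t and E7 = (2vy + p7·t)∂_y + (−v² + q7·t)∂_v + k7·t·∂_t. If [E5,E7] ≡ −E7 (mod t²), then k7 = 0. -/

import Mathlib

open MvPolynomial

noncomputable section

/-- `S = ℂ[v,y,t]` with `v = X 0`, `y = X 1`, `t = X 2`. -/
abbrev S : Type := MvPolynomial (Fin 3) ℂ

/-- The variable `v`. -/ def V : S := X 0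
/-- The variable `y`. -/ def Y : S := X 1
/-- The variable `t`. -/ def T : S := X 2

/-- The derivation `f ∂_y + g ∂_v + h ∂_t` of `S = ℂ[v,y,t]`, determined by
`y ↦ f`, `v ↦ g`, `t ↦ h`. -/
def der (f g h : S) : Derivation ℂ S S :=
  MvPolynomial.mkDerivation ℂ ![g, f, h]

/-- The inclusion `ℂ[v,y] ⊂ S` (where in `ℂ[v,y]` the variable `X 0` is `v`
and `X 1` is `y`). -/
def ι2 : MvPolynomial (Fin 2) ℂ →ₐ[ℂ] S := aeval ![V, Y]

/-- The inclusion `ℂ[v] ⊂ S`. -/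
def ι1 : Polynomial ℂ →ₐ[ℂ] S := Polynomial.aeval V

/-- `D ≡ D' (mod t²)`: the difference sends `y`, `v`, `t` into the ideal `(t²)`. -/
def ModT2 (D D' : Derivation ℂ S S) : Prop :=
  ∀ i : Fin 3, (D - D') (X i) ∈ Ideal.span {T ^ 2}

/-! Only the `∂_t`-components matter: `t` is an eigenvector of both `E5` and `E7`, so `[E5, E7]`
kills it, and the `t`-component of the congruence reduces to `k7 • t ∈ (t²)`. -/

theorem Derivation.commutator_apply_eq_zero_of_apply_eq_smul {R A : Type*} [CommRing R]
    [CommRing A] [Algebra R A] {D₁ D₂ : Derivation R A A} {x : A} {a b : R}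
    (h₁ : D₁ x = a • x) (h₂ : D₂ x = b • x) : ⁅D₁, D₂⁆ x = 0 := by
  rw [Derivation.commutator_apply, h₁, h₂, map_smul, map_smul, h₁, h₂, smul_comm, sub_self]

theorem MvPolynomial.eq_zero_of_C_mul_X_mem_span_X_sq {σ R : Type*} [CommRing R] {i : σ}
    {a : R} (h : C a * X i ∈ Ideal.span {(X i : MvPolynomial σ R) ^ 2}) : a = 0 := by
  rw [Ideal.mem_span_singleton, X_pow_eq_monomial, C_mul_X_eq_monomial,
    monomial_dvd_monomial, Finsupp.single_le_iff] at h
  simpa using h.1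

theorem der_apply_T (f g h : S) : der f g h T = h := by
  simp [der, T, mkDerivation_X]

theorem bracket_E5_E7 (p5 p7 : MvPolynomial (Fin 2) ℂ) (q5 q7 : Polynomial ℂ)
    (k5 k7 : ℂ) (E5 E7 : Derivation ℂ S S)
    (hE5 : E5 = der (2 * Y + ι2 p5 * T) (-V + ι1 q5 * T) (C k5 * T))
    (hE7 : E7 = der (2 * V * Y + ι2 p7 * T) (-V ^ 2 + ι1 q7 * T) (C k7 * T))
    (h : ModT2 ⁅E5, E7⁆ (-E7)) : k7 = 0 := by
  have hE5T : E5 T = k5 • T := by rw [hE5, der_apply_T, C_mul']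
  have hE7T : E7 T = C k7 * T := by rw [hE7, der_apply_T]
  have hbracketT : ⁅E5, E7⁆ T = 0 :=
    Derivation.commutator_apply_eq_zero_of_apply_eq_smul hE5T (hE7T.trans C_mul')
  have hT : (⁅E5, E7⁆ - -E7) T = C k7 * T := by
    rw [sub_neg_eq_add, Derivation.add_apply, hbracketT, zero_add, hE7T]
  exact eq_zero_of_C_mul_X_mem_span_X_sq (hT ▸ h 2)

end
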